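/- Let $\Omega$ be a finite set, $\nu$ a probability measure on $\Omega$ with $\nu(\eta) > 0$ for all $\eta$, and $T : \Omega \to \Omega$ an involution preserving $\nu$ (i.e., $T \circ T = \mathrm{id}$ and $\nu(T\eta) = \nu(\eta)$). Let $f : \Omega \to [0,\infty)$ with $\sum_\eta f(\eta)\nu(\eta) = 1$, let $g : \Omega \to \mathbb{R}$ satisfy $g(T\eta) = -g(\eta)$ and $|g| \leq 1$. Then for every $B > 0$: $\big|\sum_\eta g(\eta) f(\eta)\nu(\eta)\big| \leq \frac{B}{4}\sum_\eta \big(\sqrt{f}(T\eta) - \sqrt{f}(\eta)\big)^2 \nu(\eta) + \frac{1}{B}$. -/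

import Mathlib

/-!
Since `T` is a `ν`-preserving involution and `g ∘ T = -g`, the sum `∑ g f ν` equals
`∑ g (f - f ∘ T) / 2 · ν`. Pointwise, `|f - f ∘ T| / 2 = |√f - √(f ∘ T)| · (√f + √(f ∘ T)) / 2`,
and `ab ≤ B/4 a² + b²/B` together with `(√f + √(f ∘ T))² ≤ 2 (f + f ∘ T)` bounds it by the
Dirichlet-form term plus `(f + f ∘ T) / (2B)`, whose `ν`-sum is `1/B`.
-/

open Finset Real

lemma mul_le_div_four_mul_sq_add_inv_mul_sq (a b : ℝ) {B : ℝ} (hB : 0 < B) :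
    a * b ≤ B / 4 * a ^ 2 + 1 / B * b ^ 2 := by
  have key : B / 4 * a ^ 2 + 1 / B * b ^ 2 - a * b = 1 / B * (B / 2 * a - b) ^ 2 := by
    field_simp
    ring
  have : 0 ≤ 1 / B * (B / 2 * a - b) ^ 2 := by positivity
  linarith

lemma abs_sub_div_two_le_sq_sqrt_sub_add {x y B : ℝ} (hx : 0 ≤ x) (hy : 0 ≤ y) (hB : 0 < B) :
    |x - y| / 2 ≤ B / 4 * (√y - √x) ^ 2 + 1 / B * ((x + y) / 2) := by
  have hx' : √x ^ 2 = x := sq_sqrt hx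
  have hy' : √y ^ 2 = y := sq_sqrt hy
  have factor : |x - y| / 2 = |√x - √y| * ((√x + √y) / 2) := by
    have hxy : x - y = (√x - √y) * (√x + √y) := by linear_combination hy' - hx'
    rw [hxy, abs_mul, abs_of_nonneg (by positivity : 0 ≤ √x + √y)]
    ring
  have mean_sq : ((√x + √y) / 2) ^ 2 ≤ (x + y) / 2 := by
    nlinarith [sq_nonneg (√x - √y)]
  calc |x - y| / 2
      = |√x - √y| * ((√x + √y) / 2) := factor
    _ ≤ B / 4 * |√x - √y| ^ 2 + 1 / B * ((√x + √y) / 2) ^ 2 :=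
        mul_le_div_four_mul_sq_add_inv_mul_sq _ _ hB
    _ ≤ B / 4 * (√y - √x) ^ 2 + 1 / B * ((x + y) / 2) := by
        rw [sq_abs, ← neg_sub, neg_sq]
        gcongr

section Involution

variable {Ω : Type*} [Fintype Ω] {ν : Ω → ℝ} {T : Ω → Ω}

lemma sum_comp_mul_eq_of_involutive (hT : Function.Involutive T) (hTν : ∀ η, ν (T η) = ν η)
    (F : Ω → ℝ) : ∑ η, F (T η) * ν η = ∑ η, F η * ν η := by
  calc ∑ η, F (T η) * ν η = ∑ η, F (T η) * ν (T η) := by simp only [hTν]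
    _ = ∑ η, F η * ν η := hT.bijective.sum_comp (fun η => F η * ν η)

lemma sum_mul_eq_sum_mul_sub_div_two (hT : Function.Involutive T) (hTν : ∀ η, ν (T η) = ν η)
    {f g : Ω → ℝ} (hg : ∀ η, g (T η) = -g η) :
    ∑ η, g η * f η * ν η = ∑ η, g η * ((f η - f (T η)) / 2) * ν η := by
  have swap := sum_comp_mul_eq_of_involutive hT hTν (fun η => g η * f η)
  simp only [hg, neg_mul, sum_neg_distrib] at swap
  have split : ∑ η, g η * ((f η - f (T η)) / 2) * ν η
      = (∑ η, g η * f η * ν η - ∑ η, g η * f (T η) * ν η) / 2 := by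
    rw [← sum_sub_distrib, sum_div]
    exact sum_congr rfl fun η _ => by ring
  linarith

end Involution

theorem stmt_10_general {Ω : Type*} [Fintype Ω] (ν : Ω → ℝ) (T : Ω → Ω)
    (hν_pos : ∀ η, 0 < ν η)
    (hT_inv : ∀ η, T (T η) = η) (hT_ν : ∀ η, ν (T η) = ν η)
    (f : Ω → ℝ) (hf_nonneg : ∀ η, 0 ≤ f η) (hf_density : ∑ η, f η * ν η = 1)
    (g : Ω → ℝ) (hg_anti : ∀ η, g (T η) = - g η) (hg_bdd : ∀ η, |g η| ≤ 1)
    (B : ℝ) (hB : 0 < B) :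
    |∑ η, g η * f η * ν η|
      ≤ B / 4 * ∑ η, (Real.sqrt (f (T η)) - Real.sqrt (f η)) ^ 2 * ν η + 1 / B := by
  have hfT_density : ∑ η, f (T η) * ν η = 1 := by
    rw [sum_comp_mul_eq_of_involutive hT_inv hT_ν, hf_density]
  rw [sum_mul_eq_sum_mul_sub_div_two hT_inv hT_ν hg_anti]
  calc |∑ η, g η * ((f η - f (T η)) / 2) * ν η|
      ≤ ∑ η, |g η * ((f η - f (T η)) / 2) * ν η| := abs_sum_le_sum_abs _ _
    _ ≤ ∑ η, (B / 4 * (√(f (T η)) - √(f η)) ^ 2 + 1 / B * ((f η + f (T η)) / 2)) * ν η := by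
        refine sum_le_sum fun η _ => ?_
        rw [abs_mul, abs_mul, abs_of_pos (hν_pos η), abs_div, abs_two]
        refine mul_le_mul_of_nonneg_right ?_ (hν_pos η).le
        calc |g η| * (|f η - f (T η)| / 2) ≤ |f η - f (T η)| / 2 :=
              mul_le_of_le_one_left (by positivity) (hg_bdd η)
          _ ≤ _ := abs_sub_div_two_le_sq_sqrt_sub_add (hf_nonneg _) (hf_nonneg _) hB
    _ = B / 4 * ∑ η, (√(f (T η)) - √(f η)) ^ 2 * ν η
          + 1 / B * ∑ η, (f η * ν η + f (T η) * ν η) / 2 := by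
        rw [mul_sum, mul_sum, ← sum_add_distrib]
        exact sum_congr rfl fun η _ => by ring
    _ = _ := by rw [← sum_div, sum_add_distrib, hf_density, hfT_density]; norm_num

theorem stmt_10 {Ω : Type*} [Fintype Ω] (ν : Ω → ℝ) (T : Ω → Ω)
    (hν_pos : ∀ η, 0 < ν η) (hν_sum : ∑ η, ν η = 1)
    (hT_inv : ∀ η, T (T η) = η) (hT_ν : ∀ η, ν (T η) = ν η)
    (f : Ω → ℝ) (hf_nonneg : ∀ η, 0 ≤ f η) (hf_density : ∑ η, f η * ν η = 1)
    (g : Ω → ℝ) (hg_anti : ∀ η, g (T η) = - g η) (hg_bdd : ∀ η, |g η| ≤ 1)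
    (B : ℝ) (hB : 0 < B) :
    |∑ η, g η * f η * ν η|
      ≤ B / 4 * ∑ η, (Real.sqrt (f (T η)) - Real.sqrt (f η)) ^ 2 * ν η + 1 / B :=
  stmt_10_general ν T hν_pos hT_inv hT_ν f hf_nonneg hf_density g hg_anti hg_bdd B hB
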